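/- Let ε > 0 with 1/ε ≥ 3 an integer, let I = (s_1,…,s_n) be an OOEBP instance with sizes in (0,1], and let e = (e_0,…,e_{1/ε}) be a certificate vector for I (0 = e_0 < e_1 ≤ … ≤ e_{1/ε} = n, integers). Call item j large if s_j ≥ ε², let n_i be the number of large items with index in (e_i, e_{i+1}], and assume every ε³·n_i is an integer. For each i, list the large items of interval (e_i,e_{i+1}] in nonincreasing order of size as ℓ^i(1),…,ℓ^i(n_i), and for k = 1,…,1/ε³ let group G(i,k) consist of the ε³·n_i items ℓ^i((k−1)ε³n_i+1),…,ℓ^i(k·ε³n_i). Let I′ be the instance obtained from I by rounding the size of every large item up to the largest size in its group (small items unchanged), and let I″ be obtained from I′ by deleting all items of the groups G(i,1) for all i (keeping the order of the remaining items). For an instance J obtained this way, let optn_e(J) be the minimum number of bins of a feasible packing of J in which every exceeding item has size at least ε² and e (interpreted via the original item indices of I) is a certificate. Then optn_e(I″) ≤ optn_e(I) ≤ optn_e(I′) ≤ (1+3ε)·optn_e(I″). -/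
import Mathlib


open scoped BigOperators Classical

namespace OOEBP2

noncomputable section

/-- A (generalized) OOEBP instance: a finite set of item indices (ordered by
the natural order of `ℕ`) together with a size function. -/
structure Inst where
  idx : Finset ℕ
  sz : ℕ → ℝ

/-- A packing is feasible if each item is placed into a bin whose current
load (total size of earlier items of the same bin) is strictly below 1. -/
def Feasible (I : Inst) (p : ℕ → ℕ) : Prop :=
  ∀ i ∈ I.idx,
    (∑ j ∈ I.idx.filter (fun j => j < i ∧ p j = p i), I.sz j) < 1

def binLoad (I : Inst) (p : ℕ → ℕ) (b : ℕ) : ℝ :=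
  ∑ j ∈ I.idx.filter (fun j => p j = b), I.sz j

/-- Number of nonempty bins. -/
def cost (I : Inst) (p : ℕ → ℕ) : ℕ := (I.idx.image p).card

/-- Item `i` is the exceeding item of its bin: the total size of the bin is
at least 1 and `i` is its item of maximum index. -/
def IsExceeding (I : Inst) (p : ℕ → ℕ) (i : ℕ) : Prop :=
  i ∈ I.idx ∧ 1 ≤ binLoad I p (p i) ∧ ∀ j ∈ I.idx, i < j → p j ≠ p i

/-- A nice packing w.r.t. the certificate vector `e` (of length `k+1`):
feasible, all exceeding items of size at least `ε²`, and for each bin with an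
exceeding item there is a breakpoint `e t` separating the exceeding item from
the other items of the bin.  (Items are 0-based here: the 1-based index of
item `j` is `j+1`, so "1-based index > e t" reads `e t ≤ j` and
"1-based index ≤ e t" reads `j < e t`.) -/
def NicePacking (I : Inst) (p : ℕ → ℕ) (ε : ℝ) (k : ℕ) (e : ℕ → ℕ) : Prop :=
  Feasible I p ∧
  (∀ i, IsExceeding I p i → ε ^ 2 ≤ I.sz i) ∧
  (∀ i, IsExceeding I p i →
    ∃ t ≤ k, e t ≤ i ∧ ∀ j ∈ I.idx, p j = p i → j ≠ i → j < e t)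

/-- Minimum number of bins of a nice packing w.r.t. `e`. -/
def optn (I : Inst) (ε : ℝ) (k : ℕ) (e : ℕ → ℕ) : ℕ :=
  sInf {m | ∃ p, NicePacking I p ε k e ∧ cost I p = m}


lemma nice_id (I : Inst) (ε : ℝ) (k : ℕ) (e : ℕ → ℕ) (he0 : e 0 = 0)
    (hε : ε ^ 2 ≤ 1) : NicePacking I id ε k e := by
  have hload : ∀ i ∈ I.idx, binLoad I id (id i) = I.sz i := by
    intro i hi
    unfold binLoad
    have : I.idx.filter (fun j => id j = id i) = {i} := by
      ext j
      simp only [Finset.mem_filter, Finset.mem_singleton, id]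
      constructor
      · rintro ⟨_, h⟩; exact h
      · rintro rfl; exact ⟨hi, rfl⟩
    rw [this, Finset.sum_singleton]
  refine ⟨?_, ?_, ?_⟩
  · intro i hi
    have : I.idx.filter (fun j => j < i ∧ id j = id i) = ∅ := by
      apply Finset.filter_false_of_mem
      rintro j hj ⟨h1, h2⟩
      exact absurd h2 (Nat.ne_of_lt h1)
    rw [this, Finset.sum_empty]; norm_num
  · rintro i ⟨hi, hload1, -⟩
    rw [hload i hi] at hload1
    exact hε.trans hload1
  · rintro i ⟨hi, -, -⟩
    refine ⟨0, Nat.zero_le k, by rw [he0]; exact Nat.zero_le i, ?_⟩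
    intro j hj hpj hne
    exact absurd hpj hne

lemma optn_spec (I : Inst) (ε : ℝ) (k : ℕ) (e : ℕ → ℕ) (he0 : e 0 = 0)
    (hε : ε ^ 2 ≤ 1) :
    ∃ p, NicePacking I p ε k e ∧ cost I p = optn I ε k e := by
  have hne : {m | ∃ p, NicePacking I p ε k e ∧ cost I p = m}.Nonempty :=
    ⟨cost I id, id, nice_id I ε k e he0 hε, rfl⟩
  obtain ⟨p, h1, h2⟩ := Nat.sInf_mem hne
  exact ⟨p, h1, h2⟩

lemma optn_le {I : Inst} {ε : ℝ} {k : ℕ} {e : ℕ → ℕ} {p : ℕ → ℕ}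
    (h : NicePacking I p ε k e) : optn I ε k e ≤ cost I p :=
  Nat.sInf_le ⟨p, h, rfl⟩

/-- the linear-grouping rounding preserves the optimal nice cost
up to a factor `1 + 3ε`:  `optn_e(I″) ≤ optn_e(I) ≤ optn_e(I′) ≤ (1+3ε)·optn_e(I″)`. -/
theorem stmt2
    (ε : ℝ) (k : ℕ) (hk : 3 ≤ k) (hε : ε = 1 / k)
    (n : ℕ) (s : ℕ → ℝ) (hs : ∀ j < n, 0 < s j ∧ s j ≤ 1)
    -- the certificate vector
    (e : ℕ → ℕ) (he0 : e 0 = 0) (he1 : 0 < e 1)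
    (hemono : ∀ a b, a ≤ b → b ≤ k → e a ≤ e b) (hek : e k = n)
    -- numbers of large items per interval, and the divisibility assumption
    (nL : ℕ → ℕ)
    (hnL : ∀ i < k, nL i =
      ((Finset.Ico (e i) (e (i + 1))).filter (fun j => ε ^ 2 ≤ s j)).card)
    (hdiv : ∀ i < k, k ^ 3 ∣ nL i)
    -- the large items of interval i listed in nonincreasing order of size
    (ℓ : ℕ → ℕ → ℕ)
    (hℓbij : ∀ i < k, Set.BijOn (ℓ i) (Finset.range (nL i) : Set ℕ)
      (((Finset.Ico (e i) (e (i + 1))).filter (fun j => ε ^ 2 ≤ s j) : Finset ℕ) : Set ℕ))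
    (hℓsorted : ∀ i < k, ∀ a b, a ≤ b → b < nL i → s (ℓ i b) ≤ s (ℓ i a))
    -- the group size of interval i; group of the item of rank r is r / g i
    (g : ℕ → ℕ) (hg : ∀ i < k, g i = nL i / k ^ 3)
    -- the rounded sizes: each large item is rounded up to the largest size of
    -- its group (the size of the first item of the group); small items keep
    -- their original size
    (s' : ℕ → ℝ)
    (hs'small : ∀ j < n, s j < ε ^ 2 → s' j = s j)
    (hs'large : ∀ i < k, ∀ r < nL i, s' (ℓ i r) = s (ℓ i (g i * (r / g i))))
    -- the deleted items: the first group G(i,1) of every interval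
    (D : Finset ℕ)
    (hD : D = (Finset.range k).biUnion (fun i => (Finset.range (g i)).image (ℓ i)))
    (I I' I'' : Inst)
    (hI : I = ⟨Finset.range n, s⟩)
    (hI' : I' = ⟨Finset.range n, s'⟩)
    (hI'' : I'' = ⟨Finset.range n \ D, s'⟩) :
    optn I'' ε k e ≤ optn I ε k e ∧
    optn I ε k e ≤ optn I' ε k e ∧
    (optn I' ε k e : ℝ) ≤ (1 + 3 * ε) * (optn I'' ε k e) := by
  classical
  subst hε hI hI' hI'' hD
  -- basic numeric facts
  have hkR : (3:ℝ) ≤ (k:ℝ) := by exact_mod_cast hk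
  have hkR0 : (0:ℝ) < (k:ℝ) := by linarith
  have hε2le1 : ((1:ℝ)/k) ^ 2 ≤ 1 := by
    rw [div_pow, one_pow]
    rw [div_le_one (by positivity)]
    nlinarith
  have hn : 0 < n := by
    have := hemono 1 k (by omega) le_rfl
    omega
  -- every index below n lies in a unique interval
  have hcover : ∀ j, j < n → ∃ i, i < k ∧ e i ≤ j ∧ j < e (i + 1) := by
    intro j hj
    have hex' : ∃ t, j < e t := ⟨k, by omega⟩
    set t0 := Nat.find hex' with ht0
    have hspec : j < e t0 := Nat.find_spec hex'
    have ht0le : t0 ≤ k := Nat.find_le (by omega)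
    have ht0pos : 0 < t0 := by
      rcases Nat.eq_zero_or_pos t0 with h | h
      · rw [h] at hspec; omega
      · exact h
    have hmin : ¬ j < e (t0 - 1) := Nat.find_min hex' (by omega)
    have h1 : t0 - 1 + 1 = t0 := by omega
    exact ⟨t0 - 1, by omega, by omega, by rw [h1]; exact hspec⟩
  -- membership facts for the large items
  have hmem : ∀ i, i < k → ∀ r, r < nL i →
      (e i ≤ ℓ i r ∧ ℓ i r < e (i + 1)) ∧ ((1:ℝ)/k) ^ 2 ≤ s (ℓ i r) := by
    intro i hi r hr
    have h := (hℓbij i hi).mapsTo (by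
      simpa using hr : (r : ℕ) ∈ (Finset.range (nL i) : Set ℕ))
    simp only [Finset.coe_filter, Set.mem_setOf_eq, Finset.mem_Ico] at h
    exact ⟨h.1, h.2⟩
  have hlt_n : ∀ i, i < k → ∀ r, r < nL i → ℓ i r < n := by
    intro i hi r hr
    have h1 := (hmem i hi r hr).1.2
    have h2 : e (i+1) ≤ e k := hemono (i+1) k (by omega) le_rfl
    omega
  have hinj : ∀ i, i < k → ∀ i', i' < k → ∀ r, r < nL i → ∀ r', r' < nL i' →
      ℓ i r = ℓ i' r' → i = i' ∧ r = r' := by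
    intro i hi i' hi' r hr r' hr' heq
    have h1 := (hmem i hi r hr).1
    have h2 := (hmem i' hi' r' hr').1
    have hii' : i = i' := by
      by_contra hne
      rcases Nat.lt_or_ge i i' with h | h
      · have : e (i+1) ≤ e i' := hemono _ _ (by omega) (by omega)
        omega
      · have : e (i'+1) ≤ e i := hemono _ _ (by omega) (by omega)
        omega
    subst hii'
    refine ⟨rfl, ?_⟩
    exact (hℓbij i hi).injOn (by simpa using hr) (by simpa using hr') heq
  have hsurj : ∀ j, j < n → ((1:ℝ)/k) ^ 2 ≤ s j →
      ∃ i, i < k ∧ ∃ r, r < nL i ∧ ℓ i r = j := by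
    intro j hj hs
    obtain ⟨i, hi, h1, h2⟩ := hcover j hj
    have hjmem : j ∈ ((Finset.Ico (e i) (e (i+1))).filter
        (fun j => ((1:ℝ)/k) ^ 2 ≤ s j)) := by
      simp only [Finset.mem_filter, Finset.mem_Ico]
      exact ⟨⟨h1, h2⟩, hs⟩
    obtain ⟨r, hr, hrj⟩ := (hℓbij i hi).surjOn (Finset.mem_coe.mpr hjmem)
    exact ⟨i, hi, r, by simpa using hr, hrj⟩
  -- facts about group sizes
  have hnLg : ∀ i, i < k → nL i = g i * k ^ 3 := by
    intro i hi
    rw [hg i hi]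
    exact (Nat.div_mul_cancel (hdiv i hi)).symm
  have hk3 : 27 ≤ k ^ 3 := by
    calc (27:ℕ) = 3 ^ 3 := by norm_num
    _ ≤ k ^ 3 := Nat.pow_le_pow_left hk 3
  have hgle : ∀ i, i < k → g i ≤ nL i := by
    intro i hi
    rw [hnLg i hi]
    nlinarith [hk3]
  have hgpos : ∀ i, i < k → 0 < nL i → 0 < g i := by
    intro i hi h
    rw [hnLg i hi] at h
    rcases Nat.eq_zero_or_pos (g i) with h0 | h0
    · rw [h0, Nat.zero_mul] at h; omega
    · exact h0
  -- rounding only increases sizes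
  have hs'ge : ∀ j, j < n → s j ≤ s' j := by
    intro j hj
    by_cases hbig : ((1:ℝ)/k) ^ 2 ≤ s j
    · obtain ⟨i, hi, r, hr, rfl⟩ := hsurj j hj hbig
      rw [hs'large i hi r hr]
      exact hℓsorted i hi _ r (by
        rw [Nat.mul_comm]; exact Nat.div_mul_le_self r (g i)) hr
    · rw [hs'small j hj (lt_of_not_ge hbig)]
  have hs'pos : ∀ j, j < n → 0 < s' j ∧ s' j ≤ 1 := by
    intro j hj
    refine ⟨lt_of_lt_of_le (hs j hj).1 (hs'ge j hj), ?_⟩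
    by_cases hbig : ((1:ℝ)/k) ^ 2 ≤ s j
    · obtain ⟨i, hi, r, hr, rfl⟩ := hsurj j hj hbig
      rw [hs'large i hi r hr]
      refine (hs _ (hlt_n i hi _ ?_)).2
      have h1 : g i * (r / g i) ≤ r := by
        rw [Nat.mul_comm]; exact Nat.div_mul_le_self r (g i)
      omega
    · rw [hs'small j hj (lt_of_not_ge hbig)]; exact (hs j hj).2
  -- key domination for surviving large items
  have hdom : ∀ i, i < k → ∀ r, g i ≤ r → r < nL i →
      s' (ℓ i r) ≤ s (ℓ i (r - g i)) := by
    intro i hi r hgr hr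
    rw [hs'large i hi r hr]
    have h0 : 0 < g i := hgpos i hi (by omega)
    have hmod := Nat.div_add_mod r (g i)
    have hmlt : r % g i < g i := Nat.mod_lt r h0
    have hble : g i * (r / g i) ≤ r := by omega
    exact hℓsorted i hi (r - g i) (g i * (r / g i)) (by omega) (by omega)
  -- characterization of deleted items
  have hDmem : ∀ j, j ∈ (Finset.range k).biUnion
      (fun i => (Finset.range (g i)).image (ℓ i)) ↔
      ∃ i, i < k ∧ ∃ r, r < g i ∧ ℓ i r = j := by
    intro j
    simp only [Finset.mem_biUnion, Finset.mem_image, Finset.mem_range]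
  have hDmem' := hDmem
  set D := (Finset.range k).biUnion (fun i => (Finset.range (g i)).image (ℓ i))
    with hDdef
  have hDn : ∀ j ∈ D, j < n := by
    intro j hj
    obtain ⟨i, hi, r, hr, rfl⟩ := (hDmem j).mp hj
    exact hlt_n i hi r (lt_of_lt_of_le hr (hgle i hi))
  have hDlarge : ∀ j ∈ D, ((1:ℝ)/k) ^ 2 ≤ s j := by
    intro j hj
    obtain ⟨i, hi, r, hr, rfl⟩ := (hDmem j).mp hj
    exact (hmem i hi r (lt_of_lt_of_le hr (hgle i hi))).2
  -- the shift map σ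
  have hσex : ∀ j : ℕ, ∃ j' : ℕ,
      (∀ i, i < k → ∀ r, g i ≤ r → r < nL i → ℓ i r = j → j' = ℓ i (r - g i)) ∧
      ((¬ ∃ i, i < k ∧ ∃ r, g i ≤ r ∧ r < nL i ∧ ℓ i r = j) → j' = j) := by
    intro j
    by_cases h : ∃ i, i < k ∧ ∃ r, g i ≤ r ∧ r < nL i ∧ ℓ i r = j
    · obtain ⟨i, hi, r, hgr, hr, hj⟩ := h
      refine ⟨ℓ i (r - g i), ?_, fun hc => absurd ⟨i, hi, r, hgr, hr, hj⟩ hc⟩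
      intro i' hi' r' hgr' hr' hj'
      obtain ⟨rfl, rfl⟩ := hinj i hi i' hi' r hr r' hr' (hj.trans hj'.symm)
      rfl
    · exact ⟨j, fun i hi r hgr hr hj => absurd ⟨i, hi, r, hgr, hr, hj⟩ h,
        fun _ => rfl⟩
  choose σ hσ1 hσ2 using hσex
  -- case analysis for σ on items of I''
  have hσcase : ∀ j, j < n → j ∉ D →
      (σ j = j ∧ s' j = s j ∧ s j < ((1:ℝ)/k) ^ 2) ∨
      (∃ i, i < k ∧ ∃ r, g i ≤ r ∧ r < nL i ∧ ℓ i r = j ∧ σ j = ℓ i (r - g i)) := by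
    intro j hj hjD
    by_cases hbig : ((1:ℝ)/k) ^ 2 ≤ s j
    · right
      obtain ⟨i, hi, r, hr, hj'⟩ := hsurj j hj hbig
      have hgr : g i ≤ r := by
        by_contra h
        exact hjD ((hDmem j).mpr ⟨i, hi, r, by omega, hj'⟩)
      exact ⟨i, hi, r, hgr, hr, hj', hσ1 j i hi r hgr hr hj'⟩
    · left
      have hfix : σ j = j := hσ2 j (by
        rintro ⟨i, hi, r, hgr, hr, rfl⟩
        exact hbig (hmem i hi r hr).2)
      exact ⟨hfix, hs'small j hj (lt_of_not_ge hbig), lt_of_not_ge hbig⟩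
  -- σ stays within the same interval
  have hσn : ∀ j, j < n → j ∉ D → σ j < n := by
    intro j hj hjD
    rcases hσcase j hj hjD with ⟨h1, -, -⟩ | ⟨i, hi, r, hgr, hr, -, h2⟩
    · omega
    · rw [h2]; exact hlt_n i hi _ (by omega)
  have hσdom : ∀ j, j < n → j ∉ D → s' j ≤ s (σ j) := by
    intro j hj hjD
    rcases hσcase j hj hjD with ⟨h1, h2, -⟩ | ⟨i, hi, r, hgr, hr, hj', h2⟩
    · rw [h1, h2]
    · rw [h2, ← hj']; exact hdom i hi r hgr hr
  have hσlt : ∀ t, t ≤ k → ∀ j, j < n → j ∉ D → j < e t → σ j < e t := by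
    intro t ht j hj hjD hjt
    rcases hσcase j hj hjD with ⟨h1, -, -⟩ | ⟨i, hi, r, hgr, hr, hj', h2⟩
    · omega
    · have hm1 := (hmem i hi r hr).1
      have hm2 := (hmem i hi (r - g i) (by omega)).1
      rw [hj'] at hm1
      have hit : i + 1 ≤ t := by
        by_contra hc
        have : e t ≤ e i := hemono t i (by omega) (by omega)
        omega
      have : e (i+1) ≤ e t := hemono _ _ hit ht
      omega
  have hσge : ∀ t, t ≤ k → ∀ j, j < n → j ∉ D → e t ≤ j → e t ≤ σ j := by
    intro t ht j hj hjD hjt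
    rcases hσcase j hj hjD with ⟨h1, -, -⟩ | ⟨i, hi, r, hgr, hr, hj', h2⟩
    · omega
    · have hm1 := (hmem i hi r hr).1
      have hm2 := (hmem i hi (r - g i) (by omega)).1
      rw [hj'] at hm1
      have hit : t ≤ i := by
        by_contra hc
        have : e (i+1) ≤ e t := hemono (i+1) t (by omega) ht
        omega
      have : e t ≤ e i := hemono t i hit (by omega)
      omega
  have hσinj : ∀ j1, j1 < n → j1 ∉ D → ∀ j2, j2 < n → j2 ∉ D →
      σ j1 = σ j2 → j1 = j2 := by
    intro j1 hj1 hj1D j2 hj2 hj2D heq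
    rcases hσcase j1 hj1 hj1D with ⟨ha1, -, ha3⟩ | ⟨i, hi, r, hgr, hr, hj', h2⟩ <;>
      rcases hσcase j2 hj2 hj2D with ⟨hb1, -, hb3⟩ | ⟨i', hi', r', hgr', hr', hj'', h2'⟩
    · omega
    · exfalso
      have hlarge : ((1:ℝ)/k) ^ 2 ≤ s (σ j2) := by
        rw [h2']; exact (hmem i' hi' (r' - g i') (by omega)).2
      rw [← heq, ha1] at hlarge
      linarith
    · exfalso
      have hlarge : ((1:ℝ)/k) ^ 2 ≤ s (σ j1) := by
        rw [h2]; exact (hmem i hi (r - g i) (by omega)).2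
      rw [heq, hb1] at hlarge
      linarith
    · rw [h2, h2'] at heq
      obtain ⟨rfl, hrr⟩ := hinj i hi i' hi' (r - g i) (by omega) (r' - g i') (by omega)
        heq
      have : r = r' := by omega
      rw [← hj', ← hj'', this]
  -- Part B : optn I ≤ optn I'
  have partB : optn ⟨Finset.range n, s⟩ (1/(k:ℝ)) k e ≤
      optn ⟨Finset.range n, s'⟩ (1/(k:ℝ)) k e := by
    obtain ⟨p, hp, hpc⟩ := optn_spec ⟨Finset.range n, s'⟩ (1/(k:ℝ)) k e he0 hε2le1
    have hsum : ∀ (F : Finset ℕ), F ⊆ Finset.range n →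
        (∑ j ∈ F, s j) ≤ ∑ j ∈ F, s' j := by
      intro F hF
      exact Finset.sum_le_sum (fun j hj => hs'ge j (Finset.mem_range.mp (hF hj)))
    have hEx : ∀ i, IsExceeding ⟨Finset.range n, s⟩ p i →
        IsExceeding ⟨Finset.range n, s'⟩ p i := by
      rintro i ⟨h1, h2, h3⟩
      refine ⟨h1, le_trans h2 ?_, h3⟩
      exact hsum _ (Finset.filter_subset _ _)
    have hnice : NicePacking ⟨Finset.range n, s⟩ p (1/(k:ℝ)) k e := by
      refine ⟨?_, ?_, ?_⟩
      · intro i hi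
        exact lt_of_le_of_lt (hsum _ (Finset.filter_subset _ _)) (hp.1 i hi)
      · intro i hi
        have h1 : ((1:ℝ)/k) ^ 2 ≤ s' i := hp.2.1 i (hEx i hi)
        show ((1:ℝ)/k) ^ 2 ≤ s i
        by_contra hc
        rw [hs'small i (Finset.mem_range.mp hi.1) (lt_of_not_ge hc)] at h1
        exact hc h1
      · intro i hi
        exact hp.2.2 i (hEx i hi)
    calc optn ⟨Finset.range n, s⟩ (1/(k:ℝ)) k e ≤ cost ⟨Finset.range n, s⟩ p :=
          optn_le hnice
    _ = cost ⟨Finset.range n, s'⟩ p := rfl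
    _ = optn ⟨Finset.range n, s'⟩ (1/(k:ℝ)) k e := hpc
  -- Part A : optn I'' ≤ optn I
  have hmem'' : ∀ j : ℕ, j ∈ Finset.range n \ D ↔ (j < n ∧ j ∉ D) := by
    intro j; simp [Finset.mem_sdiff, Finset.mem_range]
  have hsnneg : ∀ j ∈ Finset.range n, 0 ≤ s j :=
    fun j hj => (hs j (Finset.mem_range.mp hj)).1.le
  have partA : optn ⟨Finset.range n \ D, s'⟩ (1/(k:ℝ)) k e ≤
      optn ⟨Finset.range n, s⟩ (1/(k:ℝ)) k e := by
    obtain ⟨p, hp, hpc⟩ := optn_spec ⟨Finset.range n, s⟩ (1/(k:ℝ)) k e he0 hε2le1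
    set q : ℕ → ℕ := fun j => p (σ j) with hqdef
    have hkey : ∀ F : Finset ℕ, F ⊆ Finset.range n \ D →
        (∑ j ∈ F, s' j) ≤ ∑ j' ∈ F.image σ, s j' := by
      intro F hF
      rw [Finset.sum_image (by
        intro a ha b hb hab
        have ha' := (hmem'' a).mp (hF ha)
        have hb' := (hmem'' b).mp (hF hb)
        exact hσinj a ha'.1 ha'.2 b hb'.1 hb'.2 hab)]
      exact Finset.sum_le_sum (fun j hj => by
        have hj' := (hmem'' j).mp (hF hj)
        exact hσdom j hj'.1 hj'.2)
    -- structure of a bin of the original packing of load at least 1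
    have hbinex : ∀ b : ℕ,
        1 ≤ (∑ j ∈ (Finset.range n).filter (fun j => p j = b), s j) →
        ∃ x t, x < n ∧ p x = b ∧ t ≤ k ∧ e t ≤ x ∧
          (∀ j, j < n → p j = b → j ≠ x → j < e t) ∧
          (∑ j ∈ (Finset.range n).filter (fun j => j < x ∧ p j = p x), s j) < 1 := by
      intro b hb
      set T := (Finset.range n).filter (fun j => p j = b) with hT
      have hTne : T.Nonempty := by
        by_contra hc
        rw [Finset.not_nonempty_iff_eq_empty] at hc
        rw [hc, Finset.sum_empty] at hb
        linarith
      set x := T.max' hTne with hx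
      have hxT : x ∈ T := T.max'_mem hTne
      have hxn : x < n := Finset.mem_range.mp (Finset.mem_filter.mp hxT).1
      have hxb : p x = b := (Finset.mem_filter.mp hxT).2
      have hxex : IsExceeding ⟨Finset.range n, s⟩ p x := by
        refine ⟨Finset.mem_range.mpr hxn, ?_, ?_⟩
        · show (1:ℝ) ≤ ∑ j ∈ (Finset.range n).filter (fun j => p j = p x), s j
          rw [hxb]; exact hb
        · intro j hj hlt heq
          have hjT : j ∈ T := Finset.mem_filter.mpr ⟨hj, heq.trans hxb⟩
          have := T.le_max' j hjT
          omega
      obtain ⟨t, ht, hetx, hother⟩ := hp.2.2 x hxex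
      refine ⟨x, t, hxn, hxb, ht, hetx, ?_, hp.1 x (Finset.mem_range.mpr hxn)⟩
      intro j hj hjb hne
      exact hother j (Finset.mem_range.mpr hj) (hjb.trans hxb.symm) hne
    -- the central bound
    have hcore : ∀ (b x t i : ℕ), i < n → i ∉ D → p (σ i) = b →
        x < n → p x = b → t ≤ k → e t ≤ x →
        (∀ j, j < n → p j = b → j ≠ x → j < e t) →
        (∑ j ∈ (Finset.range n).filter (fun j => j < x ∧ p j = p x), s j) < 1 →
        ∀ F : Finset ℕ, F ⊆ Finset.range n \ D → (∀ j ∈ F, p (σ j) = b) →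
        (∀ j ∈ F, j ≠ i → j < i) → (i ∉ F ∨ σ i ≠ x) →
        (∑ j ∈ F, s' j) < 1 := by
      intro b x t i hin hiD hib hxn hxb ht hetx hother hfeas F hF hFb hFi hFx
      have hxnotim : x ∉ F.image σ := by
        intro hxim
        obtain ⟨j0, hj0F, hj0x⟩ := Finset.mem_image.mp hxim
        obtain ⟨hj0n, hj0D⟩ := (hmem'' j0).mp (hF hj0F)
        by_cases hix : σ i = x
        · have hiF : i ∉ F := hFx.resolve_right (fun h => h hix)
          have hj0i : j0 = i :=
            hσinj j0 hj0n hj0D i hin hiD (hj0x.trans hix.symm)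
          exact hiF (hj0i ▸ hj0F)
        · have h1 : σ i < e t := hother (σ i) (hσn i hin hiD) hib hix
          have h2 : i < e t := by
            by_contra hc
            have := hσge t ht i hin hiD (by omega)
            omega
          have hj0i : j0 ≠ i := fun h => hix (h ▸ hj0x)
          have hj0lt : j0 < i := hFi j0 hj0F hj0i
          have h3 : e t ≤ j0 := by
            by_contra hc
            have := hσlt t ht j0 hj0n hj0D (by omega)
            omega
          omega
      have hsub : F.image σ ⊆
          (Finset.range n).filter (fun j => j < x ∧ p j = p x) := by
        intro j' hj'
        obtain ⟨j, hjF, hjj'⟩ := Finset.mem_image.mp hj'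
        obtain ⟨hjn, hjD⟩ := (hmem'' j).mp (hF hjF)
        have hj'n : j' < n := hjj' ▸ hσn j hjn hjD
        have hj'b : p j' = b := hjj' ▸ hFb j hjF
        have hj'x : j' ≠ x := fun h => hxnotim (h ▸ hj')
        have hj'lt : j' < e t := hother j' hj'n hj'b hj'x
        exact Finset.mem_filter.mpr ⟨Finset.mem_range.mpr hj'n,
          by omega, hj'b.trans hxb.symm⟩
      calc (∑ j ∈ F, s' j) ≤ ∑ j' ∈ F.image σ, s j' := hkey F hF
      _ ≤ ∑ j ∈ (Finset.range n).filter (fun j => j < x ∧ p j = p x), s j :=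
          Finset.sum_le_sum_of_subset_of_nonneg hsub
            (fun j hj _ => hsnneg j (Finset.mem_filter.mp hj).1)
      _ < 1 := hfeas
    -- small-load bins
    have hsmallbin : ∀ (b : ℕ),
        (∑ j ∈ (Finset.range n).filter (fun j => p j = b), s j) < 1 →
        ∀ F : Finset ℕ, F ⊆ Finset.range n \ D → (∀ j ∈ F, p (σ j) = b) →
        (∑ j ∈ F, s' j) < 1 := by
      intro b hb F hF hFb
      have hsub : F.image σ ⊆ (Finset.range n).filter (fun j => p j = b) := by
        intro j' hj'
        obtain ⟨j, hjF, hjj'⟩ := Finset.mem_image.mp hj'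
        obtain ⟨hjn, hjD⟩ := (hmem'' j).mp (hF hjF)
        exact Finset.mem_filter.mpr ⟨Finset.mem_range.mpr (hjj' ▸ hσn j hjn hjD),
          hjj' ▸ hFb j hjF⟩
      calc (∑ j ∈ F, s' j) ≤ ∑ j' ∈ F.image σ, s j' := hkey F hF
      _ ≤ ∑ j ∈ (Finset.range n).filter (fun j => p j = b), s j :=
          Finset.sum_le_sum_of_subset_of_nonneg hsub
            (fun j hj _ => hsnneg j (Finset.mem_filter.mp hj).1)
      _ < 1 := hb
    have hnice : NicePacking ⟨Finset.range n \ D, s'⟩ q (1/(k:ℝ)) k e := by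
      refine ⟨?_, ?_, ?_⟩
      · -- feasibility
        intro i hi
        obtain ⟨hin, hiD⟩ := (hmem'' i).mp hi
        set F := (Finset.range n \ D).filter (fun j => j < i ∧ q j = q i) with hF
        have hFsub : F ⊆ Finset.range n \ D := Finset.filter_subset _ _
        have hFb : ∀ j ∈ F, p (σ j) = p (σ i) :=
          fun j hj => (Finset.mem_filter.mp hj).2.2
        have hFi : ∀ j ∈ F, j ≠ i → j < i :=
          fun j hj _ => (Finset.mem_filter.mp hj).2.1
        have hiF : i ∉ F := by
          intro h
          exact absurd (Finset.mem_filter.mp h).2.1 (lt_irrefl i)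
        show (∑ j ∈ F, s' j) < 1
        by_cases hb : 1 ≤ (∑ j ∈ (Finset.range n).filter
            (fun j => p j = p (σ i)), s j)
        · obtain ⟨x, t, hxn, hxb, ht, hetx, hother, hfeas⟩ := hbinex _ hb
          exact hcore _ x t i hin hiD rfl hxn hxb ht hetx hother hfeas
            F hFsub hFb hFi (Or.inl hiF)
        · exact hsmallbin _ (lt_of_not_ge hb) F hFsub hFb
      · -- exceeding items are large
        rintro i ⟨hi, hload, hmax⟩
        obtain ⟨hin, hiD⟩ := (hmem'' i).mp hi
        set FF := (Finset.range n \ D).filter (fun j => q j = q i) with hFF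
        have hFsub : FF ⊆ Finset.range n \ D := Finset.filter_subset _ _
        have hFb : ∀ j ∈ FF, p (σ j) = p (σ i) :=
          fun j hj => (Finset.mem_filter.mp hj).2
        have hFi : ∀ j ∈ FF, j ≠ i → j < i := by
          intro j hj hne
          have hqj := (Finset.mem_filter.mp hj).2
          have := hmax j (Finset.mem_filter.mp hj).1
          by_contra hc
          exact this (by omega) hqj
        have hload' : (1:ℝ) ≤ ∑ j ∈ FF, s' j := hload
        have hb : 1 ≤ (∑ j ∈ (Finset.range n).filter
            (fun j => p j = p (σ i)), s j) := by
          by_contra hc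
          have := hsmallbin _ (lt_of_not_ge hc) FF hFsub hFb
          linarith
        obtain ⟨x, t, hxn, hxb, ht, hetx, hother, hfeas⟩ := hbinex _ hb
        have hσix : σ i = x := by
          by_contra hix
          have := hcore _ x t i hin hiD rfl hxn hxb ht hetx hother hfeas
            FF hFsub hFb hFi (Or.inr hix)
          linarith
        show ((1:ℝ)/k) ^ 2 ≤ s' i
        rcases hσcase i hin hiD with ⟨h1, h2, h3⟩ | ⟨i0, hi0, r, hgr, hr, hj', h2⟩
        · exfalso
          have hxex : IsExceeding ⟨Finset.range n, s⟩ p x := by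
            refine ⟨Finset.mem_range.mpr hxn, ?_, ?_⟩
            · show (1:ℝ) ≤ ∑ j ∈ (Finset.range n).filter (fun j => p j = p x), s j
              rw [hxb]; exact hb
            · intro j hj hlt heq
              have := hother j (Finset.mem_range.mp hj) (heq.trans hxb) ?_
              · omega
              · intro h; omega
          have hlg := hp.2.1 x hxex
          rw [← hσix, h1] at hlg
          exact absurd hlg (not_le.mpr h3)
        · calc ((1:ℝ)/k) ^ 2 ≤ s i := by rw [← hj']; exact (hmem i0 hi0 r hr).2
          _ ≤ s' i := hs'ge i hin
      · -- breakpoints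
        rintro i ⟨hi, hload, hmax⟩
        obtain ⟨hin, hiD⟩ := (hmem'' i).mp hi
        set FF := (Finset.range n \ D).filter (fun j => q j = q i) with hFF
        have hFsub : FF ⊆ Finset.range n \ D := Finset.filter_subset _ _
        have hFb : ∀ j ∈ FF, p (σ j) = p (σ i) :=
          fun j hj => (Finset.mem_filter.mp hj).2
        have hFi : ∀ j ∈ FF, j ≠ i → j < i := by
          intro j hj hne
          have hqj := (Finset.mem_filter.mp hj).2
          have := hmax j (Finset.mem_filter.mp hj).1
          by_contra hc
          exact this (by omega) hqj
        have hload' : (1:ℝ) ≤ ∑ j ∈ FF, s' j := hload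
        have hb : 1 ≤ (∑ j ∈ (Finset.range n).filter
            (fun j => p j = p (σ i)), s j) := by
          by_contra hc
          have := hsmallbin _ (lt_of_not_ge hc) FF hFsub hFb
          linarith
        obtain ⟨x, t, hxn, hxb, ht, hetx, hother, hfeas⟩ := hbinex _ hb
        have hσix : σ i = x := by
          by_contra hix
          have := hcore _ x t i hin hiD rfl hxn hxb ht hetx hother hfeas
            FF hFsub hFb hFi (Or.inr hix)
          linarith
        refine ⟨t, ht, ?_, ?_⟩
        · by_contra hc
          have := hσlt t ht i hin hiD (by omega)
          omega
        · intro j hj hqj hne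
          obtain ⟨hjn, hjD⟩ := (hmem'' j).mp hj
          have hσjx : σ j ≠ x := by
            intro h
            exact hne (hσinj j hjn hjD i hin hiD (h.trans hσix.symm))
          have hσjb : p (σ j) = p (σ i) := hqj
          have hσjlt : σ j < e t := hother (σ j) (hσn j hjn hjD) hσjb hσjx
          by_contra hc
          have := hσge t ht j hjn hjD (by omega)
          omega
    have hcost : cost ⟨Finset.range n \ D, s'⟩ q ≤ cost ⟨Finset.range n, s⟩ p := by
      apply Finset.card_le_card
      intro b hb
      obtain ⟨j, hj, hjb⟩ := Finset.mem_image.mp hb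
      obtain ⟨hjn, hjD⟩ := (hmem'' j).mp hj
      exact Finset.mem_image.mpr ⟨σ j, Finset.mem_range.mpr (hσn j hjn hjD), hjb⟩
    calc optn ⟨Finset.range n \ D, s'⟩ (1/(k:ℝ)) k e ≤
        cost ⟨Finset.range n \ D, s'⟩ q := optn_le hnice
    _ ≤ cost ⟨Finset.range n, s⟩ p := hcost
    _ = optn ⟨Finset.range n, s⟩ (1/(k:ℝ)) k e := hpc
  -- Part C : optn I' ≤ (1+3ε) optn I''
  obtain ⟨p, hp, hpc⟩ := optn_spec ⟨Finset.range n \ D, s'⟩ (1/(k:ℝ)) k e he0 hε2le1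
  set m := optn ⟨Finset.range n \ D, s'⟩ (1/(k:ℝ)) k e with hm
  set B := (Finset.range n \ D).image p with hB
  have hBcard : B.card = m := hpc
  set M := B.sup id with hM
  have hBle : ∀ b ∈ B, b ≤ M := fun b hb => Finset.le_sup (f := id) hb
  set q : ℕ → ℕ := fun j => if j ∈ D then M + 1 + j else p j with hq
  have hqD : ∀ j ∈ D, q j = M + 1 + j := fun j hj => if_pos hj
  have hqnD : ∀ j, j ∉ D → q j = p j := fun j hj => if_neg hj
  have hsep : ∀ j1 ∈ D, ∀ j2, j2 < n → j2 ∉ D → q j1 ≠ q j2 := by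
    intro j1 hj1 j2 hj2n hj2D
    rw [hqD j1 hj1, hqnD j2 hj2D]
    have h1 : p j2 ∈ B :=
      Finset.mem_image.mpr ⟨j2, (hmem'' j2).mpr ⟨hj2n, hj2D⟩, rfl⟩
    have := hBle _ h1
    omega
  have hfilt1 : ∀ i, i < n → i ∉ D →
      (Finset.range n).filter (fun j => j < i ∧ q j = q i) =
      (Finset.range n \ D).filter (fun j => j < i ∧ p j = p i) := by
    intro i hin hiD
    ext j
    simp only [Finset.mem_filter, Finset.mem_range, Finset.mem_sdiff]
    constructor
    · rintro ⟨hj, hji, hqj⟩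
      have hjD : j ∉ D := fun hjD => hsep j hjD i hin hiD hqj
      rw [hqnD j hjD, hqnD i hiD] at hqj
      exact ⟨⟨hj, hjD⟩, hji, hqj⟩
    · rintro ⟨⟨hj, hjD⟩, hji, hpj⟩
      exact ⟨hj, hji, by rw [hqnD j hjD, hqnD i hiD]; exact hpj⟩
  have hfilt2 : ∀ i, i < n → i ∉ D →
      (Finset.range n).filter (fun j => q j = q i) =
      (Finset.range n \ D).filter (fun j => p j = p i) := by
    intro i hin hiD
    ext j
    simp only [Finset.mem_filter, Finset.mem_range, Finset.mem_sdiff]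
    constructor
    · rintro ⟨hj, hqj⟩
      have hjD : j ∉ D := fun hjD => hsep j hjD i hin hiD hqj
      rw [hqnD j hjD, hqnD i hiD] at hqj
      exact ⟨⟨hj, hjD⟩, hqj⟩
    · rintro ⟨⟨hj, hjD⟩, hpj⟩
      exact ⟨hj, by rw [hqnD j hjD, hqnD i hiD]; exact hpj⟩
  have hfilt3 : ∀ i ∈ D,
      (Finset.range n).filter (fun j => j < i ∧ q j = q i) = ∅ := by
    intro i hi
    apply Finset.filter_false_of_mem
    rintro j hj ⟨hji, hqj⟩
    by_cases hjD : j ∈ D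
    · rw [hqD j hjD, hqD i hi] at hqj; omega
    · exact hsep i hi j (Finset.mem_range.mp hj) hjD hqj.symm
  have hexkey : ∀ i, i < n → i ∉ D →
      (1 ≤ binLoad ⟨Finset.range n, s'⟩ q (q i)) →
      (∀ j ∈ Finset.range n, i < j → q j ≠ q i) →
      IsExceeding ⟨Finset.range n \ D, s'⟩ p i := by
    intro i hin hiD hload hmax
    refine ⟨(hmem'' i).mpr ⟨hin, hiD⟩, ?_, ?_⟩
    · show (1:ℝ) ≤ ∑ j ∈ (Finset.range n \ D).filter (fun j => p j = p i), s' j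
      rw [← hfilt2 i hin hiD]
      exact hload
    · intro j hj hlt hpj
      obtain ⟨hjn, hjD⟩ := (hmem'' j).mp hj
      exact hmax j (Finset.mem_range.mpr hjn) hlt
        (by rw [hqnD j hjD, hqnD i hiD]; exact hpj)
  have hnice : NicePacking ⟨Finset.range n, s'⟩ q (1/(k:ℝ)) k e := by
    refine ⟨?_, ?_, ?_⟩
    · intro i hi
      have hin := Finset.mem_range.mp hi
      by_cases hiD : i ∈ D
      · show (∑ j ∈ (Finset.range n).filter (fun j => j < i ∧ q j = q i), s' j) < 1
        rw [hfilt3 i hiD, Finset.sum_empty]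
        norm_num
      · show (∑ j ∈ (Finset.range n).filter (fun j => j < i ∧ q j = q i), s' j) < 1
        rw [hfilt1 i hin hiD]
        exact hp.1 i ((hmem'' i).mpr ⟨hin, hiD⟩)
    · rintro i ⟨hi, hload, hmax⟩
      have hin := Finset.mem_range.mp hi
      by_cases hiD : i ∈ D
      · calc ((1:ℝ)/k) ^ 2 ≤ s i := hDlarge i hiD
        _ ≤ s' i := hs'ge i hin
      · exact hp.2.1 i (hexkey i hin hiD hload hmax)
    · rintro i ⟨hi, hload, hmax⟩
      have hin := Finset.mem_range.mp hi
      by_cases hiD : i ∈ D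
      · refine ⟨0, Nat.zero_le k, by rw [he0]; exact Nat.zero_le i, ?_⟩
        intro j hj hqj hne
        exfalso
        by_cases hjD : j ∈ D
        · rw [hqD j hjD, hqD i hiD] at hqj
          omega
        · exact hsep i hiD j (Finset.mem_range.mp hj) hjD hqj.symm
      · obtain ⟨t, ht, hti, hoth⟩ := hp.2.2 i (hexkey i hin hiD hload hmax)
        refine ⟨t, ht, hti, ?_⟩
        intro j hj hqj hne
        by_cases hjD : j ∈ D
        · exact absurd hqj (hsep j hjD i hin hiD)
        · exact hoth j ((hmem'' j).mpr ⟨Finset.mem_range.mp hj, hjD⟩)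
            (by rw [← hqnD j hjD, ← hqnD i hiD]; exact hqj) hne
  have hqcost : cost ⟨Finset.range n, s'⟩ q ≤ m + D.card := by
    have hsub : (Finset.range n).image q ⊆ B ∪ D.image (fun j => M + 1 + j) := by
      intro b hb
      obtain ⟨j, hj, hjb⟩ := Finset.mem_image.mp hb
      by_cases hjD : j ∈ D
      · exact Finset.mem_union_right _ (Finset.mem_image.mpr
          ⟨j, hjD, by rw [← hqD j hjD]; exact hjb⟩)
      · exact Finset.mem_union_left _ (Finset.mem_image.mpr
          ⟨j, (hmem'' j).mpr ⟨Finset.mem_range.mp hj, hjD⟩,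
            by rw [← hqnD j hjD]; exact hjb⟩)
    calc cost ⟨Finset.range n, s'⟩ q ≤ (B ∪ D.image (fun j => M + 1 + j)).card :=
          Finset.card_le_card hsub
    _ ≤ B.card + (D.image (fun j => M + 1 + j)).card := Finset.card_union_le _ _
    _ ≤ m + D.card := by
        have h1 := Finset.card_image_le (s := D) (f := fun j => M + 1 + j)
        omega
  have hC1 : optn ⟨Finset.range n, s'⟩ (1/(k:ℝ)) k e ≤ m + D.card :=
    le_trans (optn_le hnice) hqcost
  -- counting : D.card * (k³ - 1) ≤ m * k²
  have hinterdisj : ∀ i1 ∈ Finset.range k, ∀ i2 ∈ Finset.range k, i1 ≠ i2 →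
      ∀ c1 c2 : ℕ → Prop, ∀ (F1 F2 : Finset ℕ),
      (∀ a ∈ F1, ∃ r, r < nL i1 ∧ ℓ i1 r = a) →
      (∀ a ∈ F2, ∃ r, r < nL i2 ∧ ℓ i2 r = a) → Disjoint F1 F2 := by
    intro i1 h1 i2 h2 hne c1 c2 F1 F2 hF1 hF2
    rw [Finset.disjoint_left]
    intro a ha1 ha2
    obtain ⟨r1, hr1, hra1⟩ := hF1 a ha1
    obtain ⟨r2, hr2, hra2⟩ := hF2 a ha2
    have := (hinj i1 (Finset.mem_range.mp h1) i2 (Finset.mem_range.mp h2)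
      r1 hr1 r2 hr2 (hra1.trans hra2.symm)).1
    exact hne this
  have hDcard : D.card = ∑ i ∈ Finset.range k, g i := by
    rw [hDdef, Finset.card_biUnion]
    · apply Finset.sum_congr rfl
      intro i hi
      rw [Finset.card_image_of_injOn, Finset.card_range]
      intro a ha b hb hab
      have hik := Finset.mem_range.mp hi
      have ha' : a < nL i := lt_of_lt_of_le (by simpa using ha) (hgle i hik)
      have hb' : b < nL i := lt_of_lt_of_le (by simpa using hb) (hgle i hik)
      exact (hinj i hik i hik a ha' b hb' hab).2
    · intro i1 h1 i2 h2 hne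
      apply hinterdisj i1 h1 i2 h2 hne (fun _ => True) (fun _ => True)
      · intro a ha
        obtain ⟨r, hr, hra⟩ := Finset.mem_image.mp ha
        exact ⟨r, lt_of_lt_of_le (Finset.mem_range.mp hr)
          (hgle i1 (Finset.mem_range.mp h1)), hra⟩
      · intro a ha
        obtain ⟨r, hr, hra⟩ := Finset.mem_image.mp ha
        exact ⟨r, lt_of_lt_of_le (Finset.mem_range.mp hr)
          (hgle i2 (Finset.mem_range.mp h2)), hra⟩
  set S := (Finset.range k).biUnion
    (fun i => (Finset.Ico (g i) (nL i)).image (ℓ i)) with hS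
  have hScard : S.card = ∑ i ∈ Finset.range k, (nL i - g i) := by
    rw [hS, Finset.card_biUnion]
    · apply Finset.sum_congr rfl
      intro i hi
      rw [Finset.card_image_of_injOn, Nat.card_Ico]
      intro a ha b hb hab
      have hik := Finset.mem_range.mp hi
      have ha' : a < nL i := (Finset.mem_Ico.mp (by simpa using ha)).2
      have hb' : b < nL i := (Finset.mem_Ico.mp (by simpa using hb)).2
      exact (hinj i hik i hik a ha' b hb' hab).2
    · intro i1 h1 i2 h2 hne
      apply hinterdisj i1 h1 i2 h2 hne (fun _ => True) (fun _ => True)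
      · intro a ha
        obtain ⟨r, hr, hra⟩ := Finset.mem_image.mp ha
        exact ⟨r, (Finset.mem_Ico.mp hr).2, hra⟩
      · intro a ha
        obtain ⟨r, hr, hra⟩ := Finset.mem_image.mp ha
        exact ⟨r, (Finset.mem_Ico.mp hr).2, hra⟩
  have hSsub : ∀ j ∈ S, j ∈ Finset.range n \ D := by
    intro j hj
    obtain ⟨i, hik, hjim⟩ := Finset.mem_biUnion.mp hj
    obtain ⟨r, hr, rfl⟩ := Finset.mem_image.mp hjim
    have hik' := Finset.mem_range.mp hik
    obtain ⟨hg1, hg2⟩ := Finset.mem_Ico.mp hr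
    refine (hmem'' _).mpr ⟨hlt_n i hik' r hg2, ?_⟩
    intro hD'
    obtain ⟨i', hi', r', hr', heq⟩ := (hDmem _).mp hD'
    obtain ⟨rfl, rfl⟩ := hinj i' hi' i hik' r'
      (lt_of_lt_of_le hr' (hgle i' hi')) r hg2 heq
    omega
  have hSlarge : ∀ j ∈ S, ((1:ℝ)/k) ^ 2 ≤ s' j := by
    intro j hj
    obtain ⟨i, hik, hjim⟩ := Finset.mem_biUnion.mp hj
    obtain ⟨r, hr, rfl⟩ := Finset.mem_image.mp hjim
    have hik' := Finset.mem_range.mp hik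
    obtain ⟨hg1, hg2⟩ := Finset.mem_Ico.mp hr
    calc ((1:ℝ)/k) ^ 2 ≤ s (ℓ i r) := (hmem i hik' r hg2).2
    _ ≤ s' (ℓ i r) := hs'ge _ (hlt_n i hik' r hg2)
  have hfiber : S.card = ∑ b ∈ B, (S.filter (fun j => p j = b)).card :=
    Finset.card_eq_sum_card_fiberwise
      (fun x hx => Finset.mem_image.mpr ⟨x, hSsub x hx, rfl⟩)
  have hperbin : ∀ b ∈ B, (S.filter (fun j => p j = b)).card ≤ k ^ 2 := by
    intro b hb
    obtain ⟨j0, hj0, hj0b⟩ := Finset.mem_image.mp hb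
    set T := (Finset.range n \ D).filter (fun j => p j = b) with hT
    have hTne : T.Nonempty := ⟨j0, Finset.mem_filter.mpr ⟨hj0, hj0b⟩⟩
    set x := T.max' hTne with hx
    have hxT : x ∈ T := T.max'_mem hTne
    have hxmem := (Finset.mem_filter.mp hxT).1
    have hxb : p x = b := (Finset.mem_filter.mp hxT).2
    have hfeas : (∑ j ∈ (Finset.range n \ D).filter
        (fun j => j < x ∧ p j = p x), s' j) < 1 := hp.1 x hxmem
    set Sb := S.filter (fun j => p j = b) with hSb
    have hSbT : Sb ⊆ T := by
      intro j hj
      exact Finset.mem_filter.mpr ⟨hSsub j (Finset.mem_filter.mp hj).1,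
        (Finset.mem_filter.mp hj).2⟩
    have hsub : Sb.erase x ⊆
        (Finset.range n \ D).filter (fun j => j < x ∧ p j = p x) := by
      intro j hj
      have hjx := Finset.ne_of_mem_erase hj
      have hjT := hSbT (Finset.mem_of_mem_erase hj)
      have hjlt : j < x := lt_of_le_of_ne (T.le_max' j hjT) hjx
      exact Finset.mem_filter.mpr ⟨(Finset.mem_filter.mp hjT).1, hjlt,
        (Finset.mem_filter.mp hjT).2.trans hxb.symm⟩
    have hlow : ∀ j ∈ Sb.erase x, ((1:ℝ)/k) ^ 2 ≤ s' j := by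
      intro j hj
      exact hSlarge j (Finset.mem_filter.mp (Finset.mem_of_mem_erase hj)).1
    have hcard1 : ((Sb.erase x).card : ℝ) * ((1:ℝ)/k) ^ 2 ≤
        ∑ j ∈ Sb.erase x, s' j := by
      have := Finset.card_nsmul_le_sum (Sb.erase x) s' (((1:ℝ)/k) ^ 2) hlow
      simpa [nsmul_eq_mul] using this
    have hchain : (∑ j ∈ Sb.erase x, s' j) < 1 := by
      refine lt_of_le_of_lt ?_ hfeas
      refine Finset.sum_le_sum_of_subset_of_nonneg hsub ?_
      intro j hj _
      have hjn := (hmem'' j).mp (Finset.mem_filter.mp hj).1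
      exact (hs'pos j hjn.1).1.le
    have hlt : (((Sb.erase x).card : ℝ)) < (k:ℝ) ^ 2 := by
      have h2 : ((Sb.erase x).card : ℝ) * ((1:ℝ)/k) ^ 2 < 1 :=
        lt_of_le_of_lt hcard1 hchain
      rw [div_pow, one_pow, mul_one_div, div_lt_one (by positivity)] at h2
      exact h2
    have hltn : (Sb.erase x).card < k ^ 2 := by exact_mod_cast hlt
    by_cases hxSb : x ∈ Sb
    · have := Finset.card_erase_add_one hxSb
      omega
    · rw [Finset.erase_eq_of_notMem hxSb] at hltn
      omega
  have hcount : (∑ i ∈ Finset.range k, (nL i - g i)) ≤ m * k ^ 2 := by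
    calc (∑ i ∈ Finset.range k, (nL i - g i)) = S.card := hScard.symm
    _ = ∑ b ∈ B, (S.filter (fun j => p j = b)).card := hfiber
    _ ≤ ∑ b ∈ B, k ^ 2 := Finset.sum_le_sum hperbin
    _ = B.card * k ^ 2 := by rw [Finset.sum_const, smul_eq_mul]
    _ = m * k ^ 2 := by rw [hBcard]
  have hDbound : D.card * (k ^ 3 - 1) ≤ m * k ^ 2 := by
    have hterm : ∀ i ∈ Finset.range k, g i * (k ^ 3 - 1) = nL i - g i := by
      intro i hi
      have h := hnLg i (Finset.mem_range.mp hi)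
      have h2 : g i * (k ^ 3 - 1) + g i = g i * k ^ 3 := by
        rw [← Nat.mul_succ]
        congr 1
        omega
      omega
    calc D.card * (k ^ 3 - 1) = ∑ i ∈ Finset.range k, g i * (k ^ 3 - 1) := by
          rw [hDcard, Finset.sum_mul]
    _ = ∑ i ∈ Finset.range k, (nL i - g i) := Finset.sum_congr rfl hterm
    _ ≤ m * k ^ 2 := hcount
  -- final arithmetic
  refine ⟨partA, partB, ?_⟩
  have h1k3 : (1:ℕ) ≤ k ^ 3 := by omega
  have A : ((D.card : ℝ)) * ((k:ℝ) ^ 3 - 1) ≤ (m:ℝ) * (k:ℝ) ^ 2 := by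
    have hc := (Nat.cast_le (α := ℝ)).mpr hDbound
    push_cast [Nat.cast_sub h1k3] at hc
    exact hc
  have hK3 : (27:ℝ) ≤ (k:ℝ) ^ 3 := by
    have : (3:ℝ) ^ 3 ≤ (k:ℝ) ^ 3 := pow_le_pow_left₀ (by norm_num) hkR 3
    linarith [this]
  have hpos : (0:ℝ) < (k:ℝ) ^ 3 - 1 := by linarith
  have hm0 : (0:ℝ) ≤ (m:ℝ) := Nat.cast_nonneg m
  have ha0 : (0:ℝ) ≤ (D.card:ℝ) := Nat.cast_nonneg _
  have h4 := mul_le_mul_of_nonneg_right A (le_of_lt hkR0)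
  have h5 : (m:ℝ) * (k:ℝ) ^ 2 * k ≤ 3 * m * ((k:ℝ) ^ 3 - 1) := by
    have h7 : (0:ℝ) ≤ (m:ℝ) * (2 * (k:ℝ) ^ 3 - 3) :=
      mul_nonneg hm0 (by linarith)
    linarith [h7]
  have h3 : (D.card:ℝ) * k ≤ 3 * m := by
    have h6 : (D.card:ℝ) * k * ((k:ℝ) ^ 3 - 1) ≤ 3 * m * ((k:ℝ) ^ 3 - 1) := by
      linarith [h4, h5]
    exact le_of_mul_le_mul_right h6 hpos
  have hfin : ((m:ℝ) + D.card) ≤ (1 + 3 * (1/(k:ℝ))) * m := by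
    have hDle : (D.card:ℝ) ≤ 3 * m / k := by
      rw [le_div_iff₀ hkR0]
      linarith
    have hexpand : (1 + 3 * (1/(k:ℝ))) * m = m + 3 * m / k := by
      ring
    rw [hexpand]
    linarith
  calc ((optn ⟨Finset.range n, s'⟩ (1/(k:ℝ)) k e : ℕ) : ℝ) ≤ ((m + D.card : ℕ) : ℝ) := by
        exact_mod_cast hC1
  _ = (m:ℝ) + D.card := by push_cast; ring
  _ ≤ (1 + 3 * (1/(k:ℝ))) * m := hfin
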